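/- arXiv:2209.14703 — 6 statements merged into one kernel-verified Lean document; each statement's English description precedes it below -/
import Mathlib

section
/- In any execution s_0, s_1, …, s_T of Algorithm 1 (the lattice linear minimal dominating set algorithm), each node changes its local state at most once; that is, for each vertex i there is at most one index t < T with s_{t+1}(i) ≠ s_t(i). In particular, no node ever returns to a local state it previously left. -/
/-!
Once a node `i` has moved it is *settled*: either it is in and none of its neighbours is in, or
it is out and some neighbour is in. A settled node is neither removable nor addable, so it cannot
move, and no move of another node unsettles it: a neighbour of an `in` node is never addable,
and an `in` neighbour of an `out` node `i` can only be removed if another neighbour of `i` is in.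
So after its first move a node stays settled and never moves again.
-/

variable {V : Type*} [Fintype V] [DecidableEq V]

/-- `i` is IN and every vertex of its closed neighborhood is dominated even without `i`. -/
def Removable (G : SimpleGraph V) (s : V → Bool) (i : V) : Prop :=
  s i = true ∧ ∀ j, (j = i ∨ G.Adj i j) →
    ((j ≠ i ∧ s j = true) ∨ ∃ k, G.Adj j k ∧ k ≠ i ∧ s k = true)

/-- `i` is OUT and all its neighbors are OUT. -/
def Addable (G : SimpleGraph V) (s : V → Bool) (i : V) : Prop :=
  s i = false ∧ ∀ j, G.Adj i j → s j = false

def Unsatisfied (G : SimpleGraph V) (s : V → Bool) (i : V) : Prop :=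
  Removable G s i ∨ Addable G s i

/-- `j ≠ i` is within two hops of `i`. -/
def Adj2 (G : SimpleGraph V) (i j : V) : Prop :=
  j ≠ i ∧ (G.Adj i j ∨ ∃ k, G.Adj i k ∧ G.Adj k j)

def Forbidden (G : SimpleGraph V) (id : V → ℕ) (s : V → Bool) (i : V) : Prop :=
  Unsatisfied G s i ∧ ∀ j, Adj2 G i j → (¬ Unsatisfied G s j ∨ id i > id j)

/-- One step of Algorithm 1: a forbidden node flips its state, all others unchanged. -/
def Move (G : SimpleGraph V) (id : V → ℕ) (s s' : V → Bool) : Prop :=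
  ∃ i, Forbidden G id s i ∧ s' i = !(s i) ∧ ∀ j, j ≠ i → s' j = s j

variable {α : Type*} {G : SimpleGraph α} {id : α → ℕ} {s s' : α → Bool} {i : α}

def Settled (G : SimpleGraph α) (s : α → Bool) (i : α) : Prop :=
  (s i = true ∧ ∀ j, G.Adj i j → s j = false) ∨ (s i = false ∧ ∃ j, G.Adj i j ∧ s j = true)

lemma unsatisfied_iff_removable (h : s i = true) : Unsatisfied G s i ↔ Removable G s i := by
  simp [Unsatisfied, Addable, h]

lemma unsatisfied_iff_addable (h : s i = false) : Unsatisfied G s i ↔ Addable G s i := by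
  simp [Unsatisfied, Removable, h]

lemma Removable.exists_adj_true (h : Removable G s i) : ∃ k, G.Adj i k ∧ s k = true := by
  obtain ⟨k, hik, -, hk⟩ := (h.2 i (Or.inl rfl)).resolve_left (by simp)
  exact ⟨k, hik, hk⟩

lemma Removable.exists_other_adj_true {m j : α} (h : Removable G s m) (hmj : G.Adj m j)
    (hj : s j = false) : ∃ k, G.Adj j k ∧ k ≠ m ∧ s k = true :=
  (h.2 j (Or.inr hmj)).resolve_left (by simp [hj])

lemma Move.unsatisfied_and_eq_of_ne (h : Move G id s s') (hi : s' i ≠ s i) :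
    Unsatisfied G s i ∧ ∀ j, j ≠ i → s' j = s j := by
  obtain ⟨z, hz, -, hframe⟩ := h
  obtain rfl : z = i := by_contra fun hzi => hi (hframe i (Ne.symm hzi))
  exact ⟨hz.1, hframe⟩

lemma Settled.not_unsatisfied (h : Settled G s i) : ¬ Unsatisfied G s i := by
  rcases h with ⟨hi, hnbr⟩ | ⟨hi, k, hik, hk⟩
  · rw [unsatisfied_iff_removable hi]
    intro hR
    obtain ⟨k, hik, hk⟩ := hR.exists_adj_true
    simp [hnbr k hik] at hk
  · rw [unsatisfied_iff_addable hi]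
    rintro ⟨-, hnbr⟩
    simp [hnbr k hik] at hk

lemma Move.settled_of_ne (h : Move G id s s') (hi : s' i ≠ s i) : Settled G s' i := by
  obtain ⟨hU, hframe⟩ := h.unsatisfied_and_eq_of_ne hi
  cases hsi : s i
  · obtain ⟨-, hnbr⟩ := (unsatisfied_iff_addable hsi).1 hU
    refine Or.inl ⟨by simpa [hsi] using hi, fun j hij => ?_⟩
    rw [hframe j hij.ne', hnbr j hij]
  · obtain ⟨k, hik, hk⟩ := ((unsatisfied_iff_removable hsi).1 hU).exists_adj_true
    exact Or.inr ⟨by simpa [hsi] using hi, k, hik, by rw [hframe k hik.ne', hk]⟩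

lemma Move.apply_eq_of_settled (h : Move G id s s') (hS : Settled G s i) : s' i = s i :=
  by_contra fun hi => hS.not_unsatisfied (h.unsatisfied_and_eq_of_ne hi).1

lemma Move.settled (h : Move G id s s') (hS : Settled G s i) : Settled G s' i := by
  have hi := h.apply_eq_of_settled hS
  rcases hS with ⟨hsi, hnbr⟩ | ⟨hsi, m, him, hm⟩
  · refine Or.inl ⟨hi.trans hsi, fun j hij => ?_⟩
    by_contra hj
    obtain ⟨-, hnbr_j⟩ := (unsatisfied_iff_addable (hnbr j hij)).1
      (h.unsatisfied_and_eq_of_ne (by rwa [hnbr j hij])).1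
    simp [hnbr_j i hij.symm] at hsi
  · refine Or.inr ⟨hi.trans hsi, ?_⟩
    by_cases hm' : s' m = s m
    · exact ⟨m, him, hm'.trans hm⟩
    · obtain ⟨hU, hframe⟩ := h.unsatisfied_and_eq_of_ne hm'
      obtain ⟨k, hik, hkm, hk⟩ :=
        ((unsatisfied_iff_removable hm).1 hU).exists_other_adj_true him.symm hsi
      exact ⟨k, hik, (hframe k hkm).trans hk⟩

lemma settled_of_le {T : ℕ} {seq : ℕ → α → Bool}
    (hexec : ∀ t, t < T → Move G id (seq t) (seq (t + 1))) {a b : ℕ}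
    (hS : Settled G (seq a) i) (hab : a ≤ b) (hbT : b ≤ T) : Settled G (seq b) i := by
  induction b, hab using Nat.le_induction with
  | base => exact hS
  | succ n _ ih => exact (hexec n (by omega)).settled (ih (by omega))

lemma apply_eq_of_lt_of_ne {T : ℕ} {seq : ℕ → α → Bool}
    (hexec : ∀ t, t < T → Move G id (seq t) (seq (t + 1))) {t₁ t₂ : ℕ}
    (h₁₂ : t₁ < t₂) (h₂ : t₂ < T) (hflip : seq (t₁ + 1) i ≠ seq t₁ i) :
    seq (t₂ + 1) i = seq t₂ i :=
  (hexec t₂ h₂).apply_eq_of_settled <|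
    settled_of_le hexec ((hexec t₁ (by omega)).settled_of_ne hflip) h₁₂ h₂.le

theorem each_node_moves_at_most_once_general
    (G : SimpleGraph V) (id : V → ℕ)
    (T : ℕ) (seq : ℕ → V → Bool)
    (hexec : ∀ t, t < T → Move G id (seq t) (seq (t + 1))) :
    ∀ i : V, ∀ t₁ t₂ : ℕ, t₁ < T → t₂ < T →
      seq (t₁ + 1) i ≠ seq t₁ i → seq (t₂ + 1) i ≠ seq t₂ i → t₁ = t₂ := by
  intro i t₁ t₂ h₁ h₂ hflip₁ hflip₂
  rcases lt_trichotomy t₁ t₂ with h | h | h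
  · exact absurd (apply_eq_of_lt_of_ne hexec h h₂ hflip₁) hflip₂
  · exact h
  · exact absurd (apply_eq_of_lt_of_ne hexec h h₁ hflip₂) hflip₁

/-- In any execution of Algorithm 1, each node changes its local state at most once:
for each vertex `i` there is at most one index `t < T` with `seq (t+1) i ≠ seq t i`. -/
theorem each_node_moves_at_most_once
    (G : SimpleGraph V) (id : V → ℕ) (hid : Function.Injective id)
    (T : ℕ) (seq : ℕ → V → Bool)
    (hexec : ∀ t, t < T → Move G id (seq t) (seq (t + 1))) :
    ∀ i : V, ∀ t₁ t₂ : ℕ, t₁ < T → t₂ < T →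
      seq (t₁ + 1) i ≠ seq t₁ i → seq (t₂ + 1) i ≠ seq t₂ i → t₁ = t₂ :=
  each_node_moves_at_most_once_general G id T seq hexec
end

section
/- If two distinct vertices i and j are both Forbidden in the same state s, then j ∉ Adj²_i; that is, any two distinct Forbidden vertices are at graph distance greater than 2 from each other. -/
variable {V : Type*} [Fintype V] [DecidableEq V]

theorem Adj2.symm {W : Type*} {G : SimpleGraph W} {i j : W} (h : Adj2 G i j) : Adj2 G j i := by
  obtain ⟨hne, hij | ⟨k, hik, hkj⟩⟩ := h
  · exact ⟨hne.symm, Or.inl hij.symm⟩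
  · exact ⟨hne.symm, Or.inr ⟨k, hkj.symm, hik.symm⟩⟩

theorem Forbidden.id_lt_of_adj2 {W : Type*} {G : SimpleGraph W} {id : W → ℕ} {s : W → Bool}
    {i j : W} (hi : Forbidden G id s i) (hj : Unsatisfied G s j) (h : Adj2 G i j) : id j < id i :=
  (hi.2 j h).resolve_left (not_not_intro hj)

theorem forbidden_vertices_far_apart_general
    (G : SimpleGraph V) (id : V → ℕ)
    (s : V → Bool) (i j : V)
    (hi : Forbidden G id s i) (hj : Forbidden G id s j) :
    ¬ Adj2 G i j := fun h =>
  (hi.id_lt_of_adj2 hj.1 h).asymm (hj.id_lt_of_adj2 hi.1 h.symm)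

/-- Two distinct vertices forbidden in the same state are at distance greater than 2. -/
theorem forbidden_vertices_far_apart
    (G : SimpleGraph V) (id : V → ℕ) (hid : Function.Injective id)
    (s : V → Bool) (i j : V) (hij : i ≠ j)
    (hi : Forbidden G id s i) (hj : Forbidden G id s j) :
    ¬ Adj2 G i j :=
  forbidden_vertices_far_apart_general G id s i j hi hj
end

section
/- If vertex j satisfies Forbidden(j,s) and Removable(j,s) in state s, and s' is the state obtained from s by flipping j to OUT (s'(j) = false, s'(k) = s(k) for k ≠ j), then every vertex that is dominated in s is still dominated in s'; here a vertex v is dominated in a state s iff s(v) = true or some neighbor k of v has s(k) = true. -/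
variable {V : Type*} [Fintype V] [DecidableEq V]

/-- `v` is dominated in state `s`. -/
def Dominated (G : SimpleGraph V) (s : V → Bool) (v : V) : Prop :=
  s v = true ∨ ∃ k, G.Adj v k ∧ s k = true

theorem Removable.dominated_of_closedNbhd {α : Type*} {G : SimpleGraph α} {s s' : α → Bool}
    {j w : α} (hr : Removable G s j) (hs' : ∀ k, k ≠ j → s' k = s k) (hw : w = j ∨ G.Adj j w) :
    Dominated G s' w := by
  rcases hr.2 w hw with ⟨hwj, hsw⟩ | ⟨k, hwk, hkj, hsk⟩
  · exact .inl ((hs' w hwj).trans hsw)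
  · exact .inr ⟨k, hwk, (hs' k hkj).trans hsk⟩

theorem removable_flip_preserves_domination_general
    (G : SimpleGraph V)
    (s : V → Bool) (j : V)
    (hr : Removable G s j)
    (s' : V → Bool) (hs' : ∀ k, k ≠ j → s' k = s k) :
    ∀ v : V, Dominated G s v → Dominated G s' v := by
  rintro v (hsv | ⟨k, hvk, hsk⟩)
  · by_cases hvj : v = j
    · exact hr.dominated_of_closedNbhd hs' (.inl hvj)
    · exact .inl ((hs' v hvj).trans hsv)
  · by_cases hkj : k = j
    · exact hr.dominated_of_closedNbhd hs' (.inr (hkj ▸ hvk.symm))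
    · exact .inr ⟨k, hvk, (hs' k hkj).trans hsk⟩

/-- When a forbidden removable vertex moves OUT, every dominated vertex stays dominated. -/
theorem removable_flip_preserves_domination
    (G : SimpleGraph V) (id : V → ℕ) (hid : Function.Injective id)
    (s : V → Bool) (j : V)
    (hf : Forbidden G id s j) (hr : Removable G s j)
    (s' : V → Bool) (hs'j : s' j = false) (hs' : ∀ k, k ≠ j → s' k = s k) :
    ∀ v : V, Dominated G s v → Dominated G s' v :=
  removable_flip_preserves_domination_general G s j hr s' hs'
end

section
/- If vertex i satisfies Forbidden(i,s) and Removable(i,s) in state s, and s' is the state obtained from s by flipping i to OUT (s'(i) = false, s'(j) = s(j) for j ≠ i), then Unsatisfied(i,s') is false; that is, after moving OUT, i is neither Removable nor Addable in s'. -/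
variable {V : Type*} [Fintype V] [DecidableEq V]

theorem Removable.exists_adj_eq_true {V : Type*} {G : SimpleGraph V} {s : V → Bool} {i : V}
    (hr : Removable G s i) : ∃ k, G.Adj i k ∧ s k = true := by
  rcases hr.2 i (Or.inl rfl) with ⟨hne, -⟩ | ⟨k, hik, -, hk⟩
  · exact absurd rfl hne
  · exact ⟨k, hik, hk⟩

theorem not_removable_of_eq_false {V : Type*} {G : SimpleGraph V} {s : V → Bool} {i : V}
    (hi : s i = false) : ¬ Removable G s i :=
  fun hr => absurd hr.1 (by simp [hi])

theorem not_addable_of_adj_eq_true {V : Type*} {G : SimpleGraph V} {s : V → Bool} {i k : V}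
    (hik : G.Adj i k) (hk : s k = true) : ¬ Addable G s i :=
  fun ha => absurd hk (by simp [ha.2 k hik])

theorem removable_flip_satisfied_general
    (G : SimpleGraph V)
    (s : V → Bool) (i : V)
    (hr : Removable G s i)
    (s' : V → Bool) (hs'i : s' i = false) (hs' : ∀ j, j ≠ i → s' j = s j) :
    ¬ Unsatisfied G s' i := by
  obtain ⟨k, hik, hk⟩ := hr.exists_adj_eq_true
  have hk' : s' k = true := (hs' k hik.ne').trans hk
  rintro (hrem | hadd)
  · exact not_removable_of_eq_false hs'i hrem
  · exact not_addable_of_adj_eq_true hik hk' hadd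

/-- After a forbidden removable vertex moves OUT, it is no longer unsatisfied. -/
theorem removable_flip_satisfied
    (G : SimpleGraph V) (id : V → ℕ) (hid : Function.Injective id)
    (s : V → Bool) (i : V)
    (hf : Forbidden G id s i) (hr : Removable G s i)
    (s' : V → Bool) (hs'i : s' i = false) (hs' : ∀ j, j ≠ i → s' j = s j) :
    ¬ Unsatisfied G s' i :=
  removable_flip_satisfied_general G s i hr s' hs'i hs'
end

section
/- Characterization of terminal states of Algorithm 1: in a state s, no vertex is Unsatisfied if and only if D(s) = {v | s(v) = true} is a minimal dominating set of G, i.e., D(s) is a dominating set of G and for every i ∈ D(s) the set D(s) \ {i} is not a dominating set of G. -/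
variable {V : Type*} [Fintype V] [DecidableEq V]

/-- `D` is a dominating set of `G`. -/
def IsDomSet (G : SimpleGraph V) (D : Set V) : Prop :=
  ∀ v : V, v ∈ D ∨ ∃ u ∈ D, G.Adj v u

/-! `Addable G s i` says that `i` is not dominated by `D(s)`, and `Removable G s i` that every
vertex of the closed neighbourhood of `i` is still dominated by `D(s) \ {i}`. Vertices outside
that neighbourhood are dominated by `D(s) \ {i}` as soon as they are dominated by `D(s)`, so for a
dominating `D(s)` removability of `i` is exactly the failure of minimality at `i`. -/

section

variable {W : Type*} {G : SimpleGraph W} {s : W → Bool} {i : W}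

theorem isDomSet_iff_forall_not_addable :
    IsDomSet G {v | s v = true} ↔ ∀ i, ¬ Addable G s i := by
  simp only [IsDomSet, Addable, Set.mem_ofPred_eq, not_and, not_forall, Bool.not_eq_false,
    exists_prop]
  exact forall_congr' fun v => by cases s v <;> simp [and_comm]

theorem removable_iff :
    Removable G s i ↔ s i = true ∧ ∀ j, (j = i ∨ G.Adj i j) →
      j ∈ {v | s v = true} \ {i} ∨ ∃ u ∈ {v | s v = true} \ {i}, G.Adj j u := by
  simp only [Removable, Set.mem_sdiff, Set.mem_ofPred_eq, Set.mem_singleton_iff]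
  refine and_congr_right fun _ => forall₂_congr fun j _ => or_congr and_comm ?_
  exact exists_congr fun k => by tauto

theorem removable_of_isDomSet_diff_singleton (hi : s i = true)
    (h : IsDomSet G ({v | s v = true} \ {i})) : Removable G s i :=
  removable_iff.2 ⟨hi, fun j _ => h j⟩

theorem IsDomSet.diff_singleton_of_closedNbhd {D : Set W} (hD : IsDomSet G D)
    (hi : ∀ j, (j = i ∨ G.Adj i j) → j ∈ D \ {i} ∨ ∃ u ∈ D \ {i}, G.Adj j u) :
    IsDomSet G (D \ {i}) := by
  intro j
  by_cases hj : j = i ∨ G.Adj i j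
  · exact hi j hj
  rw [not_or] at hj
  rcases hD j with hjD | ⟨u, huD, hju⟩
  · exact Or.inl ⟨hjD, hj.1⟩
  · have hui : u ≠ i := by
      rintro rfl
      exact hj.2 hju.symm
    exact Or.inr ⟨u, ⟨huD, hui⟩, hju⟩

theorem IsDomSet.diff_singleton_of_removable (hD : IsDomSet G {v | s v = true})
    (hi : Removable G s i) : IsDomSet G ({v | s v = true} \ {i}) :=
  hD.diff_singleton_of_closedNbhd (removable_iff.1 hi).2

end

/-- Terminal-state characterization: no vertex is unsatisfied iff
`{v | s v = true}` is a minimal dominating set. -/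
theorem no_unsatisfied_iff_minimal_dominating
    (G : SimpleGraph V) (s : V → Bool) :
    (∀ i : V, ¬ Unsatisfied G s i) ↔
      (IsDomSet G {v | s v = true} ∧
        ∀ i ∈ {v | s v = true}, ¬ IsDomSet G ({v | s v = true} \ {i})) := by
  simp only [Unsatisfied, not_or, forall_and]
  constructor
  · rintro ⟨hrem, hadd⟩
    exact ⟨isDomSet_iff_forall_not_addable.2 hadd,
      fun i hi hdom => hrem i (removable_of_isDomSet_diff_singleton hi hdom)⟩
  · rintro ⟨hdom, hmin⟩
    exact ⟨fun i hrem => hmin i hrem.1 (hdom.diff_singleton_of_removable hrem),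
      isDomSet_iff_forall_not_addable.1 hdom⟩
end

section
/- No step-back implies the move bound, stated contrapositively (pigeonhole step of Theorem 2): if x_0, x_1, …, x_T is a sequence of global states in Fin n → Fin m such that each consecutive pair differs in exactly one coordinate, and T ≥ n·(m − 1) + 1, then some process revisits a local state: there exist an index i : Fin n and times t₁ < t₂ ≤ T with x_{t₁}(i) = x_{t₂}(i) and x_t(i) ≠ x_{t₁}(i) for some t with t₁ < t < t₂. -/
/-!
Every step changes some process, so among `T > n * (m - 1)` steps some process `i` changes
at least `m` times. Its local state at time `0` and right after each of those changes gives
`m + 1` times, so two of them, `a < b`, show the same state. Here `b` is right after a change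
at time `c ≥ a`, and `c ≠ a` because the state at `c` differs from that at `b`: process `i`
leaves its state at `a`, is elsewhere at `c`, and is back at `b`.
-/

open Finset

section ChangeTimes

variable {α : Type*} [DecidableEq α]

def changeTimes (f : ℕ → α) (T : ℕ) : Finset ℕ :=
  {t ∈ range T | f (t + 1) ≠ f t}

theorem mem_changeTimes {f : ℕ → α} {T t : ℕ} :
    t ∈ changeTimes f T ↔ t < T ∧ f (t + 1) ≠ f t := by
  simp [changeTimes]

theorem exists_revisit_of_card_le_card_changeTimes [Fintype α] (f : ℕ → α) (T : ℕ)
    (hcard : Fintype.card α ≤ #(changeTimes f T)) :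
    ∃ t₁ t₂, t₁ < t₂ ∧ t₂ ≤ T ∧ f t₁ = f t₂ ∧ ∃ t, t₁ < t ∧ t < t₂ ∧ f t ≠ f t₁ := by
  set B := insert 0 ((changeTimes f T).image (· + 1))
  have hB : #B = #(changeTimes f T) + 1 := by
    rw [card_insert_of_notMem (by simp), card_image_of_injective _ (add_left_injective 1)]
  have revisit_of_lt : ∀ a ∈ B, ∀ b ∈ B, a < b → f a = f b →
      ∃ t₁ t₂, t₁ < t₂ ∧ t₂ ≤ T ∧ f t₁ = f t₂ ∧ ∃ t, t₁ < t ∧ t < t₂ ∧ f t ≠ f t₁ := by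
    intro a _ b hb hab hfab
    obtain ⟨c, hc, rfl⟩ : ∃ c ∈ changeTimes f T, c + 1 = b := by
      simpa [B, Nat.ne_zero_of_lt hab] using hb
    obtain ⟨hcT, hmove⟩ := mem_changeTimes.mp hc
    have hac : a < c := by
      rcases (Nat.lt_succ_iff.mp hab).lt_or_eq with h | rfl
      · exact h
      · exact absurd hfab.symm hmove
    exact ⟨a, c + 1, hab, hcT, hfab, c, hac, Nat.lt_succ_self c, hfab ▸ hmove.symm⟩
  obtain ⟨a, ha, b, hb, hne, hfab⟩ :=
    exists_ne_map_eq_of_card_lt_of_maps_to (s := B) (t := univ) (f := f)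
      (by rw [card_univ, hB]; omega) (fun _ _ => mem_coe.mpr (mem_univ _))
  rcases hne.lt_or_gt with h | h
  · exact revisit_of_lt a ha b hb h hfab
  · exact revisit_of_lt b hb a ha h hfab.symm

end ChangeTimes

theorem exists_lt_card_changeTimes {ι α : Type*} [Fintype ι] [DecidableEq α]
    (x : ℕ → ι → α) (T k : ℕ) (hstep : ∀ t < T, ∃ i, x (t + 1) i ≠ x t i)
    (hT : Fintype.card ι * k < T) :
    ∃ i, k < #(changeTimes (fun t => x t i) T) := by
  by_contra! hfew
  have hcover : range T ⊆ univ.biUnion fun i => changeTimes (fun t => x t i) T := by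
    intro t ht
    obtain ⟨i, hi⟩ := hstep t (mem_range.mp ht)
    exact mem_biUnion.mpr ⟨i, mem_univ i, mem_changeTimes.mpr ⟨mem_range.mp ht, hi⟩⟩
  have := (card_le_card hcover).trans (card_biUnion_le_card_mul _ _ k fun i _ => hfew i)
  rw [card_range, card_univ] at this
  omega

theorem long_execution_revisits_state_general
    (n m T : ℕ) (seq : ℕ → Fin n → Fin m)
    (hstep : ∀ t, t < T → ∃ i : Fin n,
      seq (t + 1) i ≠ seq t i ∧ ∀ j : Fin n, j ≠ i → seq (t + 1) j = seq t j)
    (hT : n * (m - 1) + 1 ≤ T) :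
    ∃ (i : Fin n) (t₁ t₂ : ℕ), t₁ < t₂ ∧ t₂ ≤ T ∧ seq t₁ i = seq t₂ i ∧
      ∃ t, t₁ < t ∧ t < t₂ ∧ seq t i ≠ seq t₁ i := by
  obtain ⟨i, hi⟩ := exists_lt_card_changeTimes seq T (m - 1)
    (fun t ht => (hstep t ht).imp fun _ h => h.1) (by rw [Fintype.card_fin]; omega)
  exact ⟨i, exists_revisit_of_card_le_card_changeTimes (fun t => seq t i) T
    (by rw [Fintype.card_fin]; omega)⟩

/-- Pigeonhole step of Theorem 2: if each step changes exactly one process's local state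
and there are at least `n * (m - 1) + 1` steps, then some process revisits a local
state it previously left. -/
theorem long_execution_revisits_state
    (n m T : ℕ) (hm : 1 ≤ m) (seq : ℕ → Fin n → Fin m)
    (hstep : ∀ t, t < T → ∃ i : Fin n,
      seq (t + 1) i ≠ seq t i ∧ ∀ j : Fin n, j ≠ i → seq (t + 1) j = seq t j)
    (hT : n * (m - 1) + 1 ≤ T) :
    ∃ (i : Fin n) (t₁ t₂ : ℕ), t₁ < t₂ ∧ t₂ ≤ T ∧ seq t₁ i = seq t₂ i ∧
      ∃ t, t₁ < t ∧ t < t₂ ∧ seq t i ≠ seq t₁ i :=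
  long_execution_revisits_state_general n m T seq hstep hT
end
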